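/- arXiv:2208.07723 — 3 statements merged into one kernel-verified Lean document; each statement's English description precedes it below -/
import Mathlib

section
/- For every real p ≥ 2 there exists a constant C > 0, depending only on p, such that for all ε ∈ (0,1) and all ξ, η ∈ ℝ: ( (ε² + ξ²)^{(p−2)/2} ξ − (ε² + η²)^{(p−2)/2} η ) (ξ − η) ≥ C |ξ − η|^p. -/
noncomputable section
open Real

theorem stmt9 (p : ℝ) (hp : 2 ≤ p) :
    ∃ C : ℝ, 0 < C ∧ ∀ ε ∈ Set.Ioo (0 : ℝ) 1, ∀ ξ η : ℝ,
      ((ε ^ 2 + ξ ^ 2) ^ ((p - 2) / 2) * ξ - (ε ^ 2 + η ^ 2) ^ ((p - 2) / 2) * η) * (ξ - η) ≥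
        C * |ξ - η| ^ p := by
  refine ⟨(2:ℝ) ^ (1 - p), by positivity, ?_⟩
  rintro ε ⟨hε0, -⟩ ξ η
  rcases eq_or_ne ξ η with h | h
  · simp [h, Real.zero_rpow (by linarith : p ≠ 0)]
  set A := (ε ^ 2 + ξ ^ 2) ^ ((p - 2) / 2) with hA
  set B := (ε ^ 2 + η ^ 2) ^ ((p - 2) / 2) with hB
  set t := |ξ - η| with htdef
  have ht : 0 < t := abs_pos.mpr (sub_ne_zero.mpr h)
  have hq : (0:ℝ) ≤ (p - 2) / 2 := by linarith
  have hA0 : 0 < A := Real.rpow_pos_of_pos (by positivity) _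
  have hB0 : 0 < B := Real.rpow_pos_of_pos (by positivity) _
  -- cross term is nonnegative
  have hcross : 0 ≤ (A - B) * (ξ ^ 2 - η ^ 2) := by
    rcases le_total (η ^ 2) (ξ ^ 2) with hle | hle
    · exact mul_nonneg (sub_nonneg.mpr (Real.rpow_le_rpow (by positivity)
        (by linarith) hq)) (sub_nonneg.mpr hle)
    · have h1 : 0 ≤ (B - A) * (η ^ 2 - ξ ^ 2) := mul_nonneg (sub_nonneg.mpr
        (Real.rpow_le_rpow (by positivity) (by linarith) hq)) (sub_nonneg.mpr hle)
      nlinarith [h1]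
  -- key: ((t/2)^2)^((p-2)/2) ≤ A + B
  have hkey : ((t / 2) ^ 2) ^ ((p - 2) / 2) ≤ A + B := by
    have htri : t ≤ |ξ| + |η| := abs_sub ξ η
    rcases le_total |η| |ξ| with hle | hle
    · have h1 : (t / 2) ^ 2 ≤ ε ^ 2 + ξ ^ 2 := by
        have : t / 2 ≤ |ξ| := by linarith
        nlinarith [sq_abs ξ, abs_nonneg ξ, ht.le, sq_nonneg ε]
      calc ((t / 2) ^ 2) ^ ((p - 2) / 2) ≤ A := Real.rpow_le_rpow (by positivity) h1 hq
        _ ≤ A + B := by linarith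
    · have h1 : (t / 2) ^ 2 ≤ ε ^ 2 + η ^ 2 := by
        have : t / 2 ≤ |η| := by linarith
        nlinarith [sq_abs η, abs_nonneg η, ht.le, sq_nonneg ε]
      calc ((t / 2) ^ 2) ^ ((p - 2) / 2) ≤ B := Real.rpow_le_rpow (by positivity) h1 hq
        _ ≤ A + B := by linarith
  -- rewrite ((t/2)^2)^((p-2)/2) = (t/2)^(p-2)
  have hsq : ((t / 2) ^ 2) ^ ((p - 2) / 2) = (t / 2) ^ (p - 2) := by
    rw [← Real.rpow_natCast (t / 2) 2, ← Real.rpow_mul (by positivity)]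
    congr 1
    push_cast
    ring
  -- compute the RHS bound
  have hcompute : (2:ℝ) ^ (1 - p) * t ^ p = (t / 2) ^ (p - 2) / 2 * t ^ 2 := by
    have hx : (2:ℝ) ^ (p - 2) * 2 = 2 ^ (p - 1) := by
      rw [show p - 1 = p - 2 + 1 by ring, Real.rpow_add two_pos, Real.rpow_one]
    have h21 : (2:ℝ) ^ (1 - p) * 2 ^ (p - 1) = 1 := by
      rw [← Real.rpow_add two_pos]; norm_num
    rw [Real.div_rpow ht.le (by norm_num : (0:ℝ) ≤ 2)]
    rw [show t ^ (2:ℕ) = t ^ ((2:ℕ):ℝ) from (Real.rpow_natCast t 2).symm]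
    rw [div_div, div_mul_eq_mul_div, ← Real.rpow_add ht,
      show (((2:ℕ)):ℝ) = (2:ℝ) by norm_num, show p - 2 + 2 = p by ring, hx,
      eq_div_iff (by positivity)]
    linear_combination t ^ p * h21
  have hts : (ξ - η) ^ 2 = t ^ 2 := (sq_abs _).symm
  have hid : (A * ξ - B * η) * (ξ - η)
      = (A + B) / 2 * (ξ - η) ^ 2 + (A - B) * (ξ ^ 2 - η ^ 2) / 2 := by ring
  have hmain : (A + B) / 2 * t ^ 2 ≥ (t / 2) ^ (p - 2) / 2 * t ^ 2 := by
    have := hsq ▸ hkey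
    have h2 : (0:ℝ) ≤ t ^ 2 := by positivity
    nlinarith
  rw [ge_iff_le, hcompute, hid, hts]
  linarith
end
end

section
/- For every real p with 1 < p < 2 there exists a constant C > 0, depending only on p, such that for all ε ∈ (0,1) and all ξ, η ∈ ℝ: ( (ε² + ξ²)^{(p−2)/2} ξ − (ε² + η²)^{(p−2)/2} η ) (ξ − η) ≥ C |ξ − η|² (ε² + ξ² + η²)^{(p−2)/2}. -/
/-!
The derivative of `φ(s) = (ε² + s²)^{(p-2)/2} s` is `(ε² + s²)^{(p-4)/2} (ε² + (p-1) s²)`, which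
for `p ≤ 2` is at least `(p-1)(ε² + s²)^{(p-2)/2}`. Between `η` and `ξ` we have
`s² ≤ ξ² + η²`, and `t ↦ t^{(p-2)/2}` is antitone, so `φ' ≥ (p-1)(ε² + ξ² + η²)^{(p-2)/2}` there;
the mean value theorem then gives the inequality with `C = p - 1`.
-/

noncomputable section

open Real

lemma rpow_sub_two_div_two_eq (p : ℝ) {t : ℝ} (ht : t ≠ 0) :
    t ^ ((p - 2) / 2) = t ^ ((p - 4) / 2) * t := by
  rw [show (p - 2) / 2 = (p - 4) / 2 + 1 by ring, rpow_add_one ht]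

def regPLaplacianFlux (p ε ξ : ℝ) : ℝ := (ε ^ 2 + ξ ^ 2) ^ ((p - 2) / 2) * ξ

section

variable {p ε : ℝ}

lemma hasDerivAt_regPLaplacianFlux (hε : ε ≠ 0) (s : ℝ) :
    HasDerivAt (regPLaplacianFlux p ε)
      ((ε ^ 2 + s ^ 2) ^ ((p - 4) / 2) * (ε ^ 2 + (p - 1) * s ^ 2)) s := by
  have hA : ε ^ 2 + s ^ 2 ≠ 0 := by positivity
  have hbase : HasDerivAt (fun s : ℝ => ε ^ 2 + s ^ 2) (2 * s) s := by
    simpa using (hasDerivAt_pow 2 s).const_add (ε ^ 2)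
  have h : HasDerivAt (regPLaplacianFlux p ε) _ s :=
    (hbase.rpow_const (p := (p - 2) / 2) (Or.inl hA)).mul (hasDerivAt_id s)
  convert h using 1
  rw [show (p - 2) / 2 - 1 = (p - 4) / 2 by ring, rpow_sub_two_div_two_eq p hA]
  ring

lemma sub_one_mul_rpow_le_deriv_regPLaplacianFlux (hp : p ≤ 2) (hε : ε ≠ 0) (s : ℝ) :
    (p - 1) * (ε ^ 2 + s ^ 2) ^ ((p - 2) / 2) ≤ deriv (regPLaplacianFlux p ε) s := by
  have hA : 0 < ε ^ 2 + s ^ 2 := by positivity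
  have hpow : 0 < (ε ^ 2 + s ^ 2) ^ ((p - 4) / 2) := by positivity
  rw [(hasDerivAt_regPLaplacianFlux hε s).deriv, rpow_sub_two_div_two_eq p hA.ne']
  -- the difference of the two sides is `(2 - p) ε² (ε² + s²)^{(p-4)/2}`
  nlinarith [mul_nonneg hpow.le (mul_nonneg (sub_nonneg.2 hp) (sq_nonneg ε))]

lemma mul_sub_le_regPLaplacianFlux_sub (hp1 : 1 ≤ p) (hp2 : p ≤ 2) (hε : ε ≠ 0)
    {ξ η : ℝ} (hle : η ≤ ξ) :
    (p - 1) * (ε ^ 2 + ξ ^ 2 + η ^ 2) ^ ((p - 2) / 2) * (ξ - η) ≤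
      regPLaplacianFlux p ε ξ - regPLaplacianFlux p ε η := by
  have hdiff : Differentiable ℝ (regPLaplacianFlux p ε) := fun s =>
    (hasDerivAt_regPLaplacianFlux hε s).differentiableAt
  refine (convex_Icc η ξ).mul_sub_le_image_sub_of_le_deriv hdiff.continuous.continuousOn
    hdiff.differentiableOn (fun s hs => ?_) η (Set.left_mem_Icc.2 hle) ξ (Set.right_mem_Icc.2 hle)
    hle
  rw [interior_Icc] at hs
  have hsq : s ^ 2 ≤ ξ ^ 2 + η ^ 2 := by
    rcases le_total 0 s with h | h <;> nlinarith [hs.1, hs.2]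
  have hanti : (ε ^ 2 + ξ ^ 2 + η ^ 2) ^ ((p - 2) / 2) ≤ (ε ^ 2 + s ^ 2) ^ ((p - 2) / 2) :=
    rpow_le_rpow_of_nonpos (by positivity) (by linarith) (by linarith)
  calc (p - 1) * (ε ^ 2 + ξ ^ 2 + η ^ 2) ^ ((p - 2) / 2)
      ≤ (p - 1) * (ε ^ 2 + s ^ 2) ^ ((p - 2) / 2) :=
        mul_le_mul_of_nonneg_left hanti (by linarith)
    _ ≤ deriv (regPLaplacianFlux p ε) s :=
        sub_one_mul_rpow_le_deriv_regPLaplacianFlux hp2 hε s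

theorem regPLaplacianFlux_strongly_monotone (hp1 : 1 ≤ p) (hp2 : p ≤ 2) (hε : ε ≠ 0)
    (ξ η : ℝ) :
    (p - 1) * |ξ - η| ^ 2 * (ε ^ 2 + ξ ^ 2 + η ^ 2) ^ ((p - 2) / 2) ≤
      (regPLaplacianFlux p ε ξ - regPLaplacianFlux p ε η) * (ξ - η) := by
  wlog hle : η ≤ ξ generalizing ξ η
  · have := this η ξ (le_of_not_ge hle)
    rw [abs_sub_comm, add_right_comm] at this
    linarith
  rw [sq_abs]
  calc (p - 1) * (ξ - η) ^ 2 * (ε ^ 2 + ξ ^ 2 + η ^ 2) ^ ((p - 2) / 2)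
      = (p - 1) * (ε ^ 2 + ξ ^ 2 + η ^ 2) ^ ((p - 2) / 2) * (ξ - η) * (ξ - η) := by ring
    _ ≤ _ := mul_le_mul_of_nonneg_right (mul_sub_le_regPLaplacianFlux_sub hp1 hp2 hε hle)
        (sub_nonneg.2 hle)

end

theorem stmt10 (p : ℝ) (hp1 : 1 < p) (hp2 : p < 2) :
    ∃ C : ℝ, 0 < C ∧ ∀ ε ∈ Set.Ioo (0 : ℝ) 1, ∀ ξ η : ℝ,
      ((ε ^ 2 + ξ ^ 2) ^ ((p - 2) / 2) * ξ - (ε ^ 2 + η ^ 2) ^ ((p - 2) / 2) * η) * (ξ - η) ≥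
        C * |ξ - η| ^ 2 * (ε ^ 2 + ξ ^ 2 + η ^ 2) ^ ((p - 2) / 2) :=
  ⟨p - 1, sub_pos.2 hp1, fun _ hε ξ η =>
    regPLaplacianFlux_strongly_monotone hp1.le hp2.le hε.1.ne' ξ η⟩
end
end

section
/- Let N ≥ 2 be an integer and p_1,…,p_N reals with p_i > 2N/(N+2) for all i. Let r > 0 and set q_i = p_i + r. Assume that either (i) (max_i p_i)/(min_i p_i) < 1 + 2/N and max_i p_i + r > 2, or (ii) (max_i p_i)/(min_i p_i) < 1 + 1/N. Then for every i ∈ {1,…,N}: q_i · ( Σ_{j=1}^N 1/q_j − 1 ) < N; equivalently, whenever q_h := N/(Σ_{j=1}^N 1/q_j) < N, every q_i is strictly below the anisotropic Sobolev exponent q_h* = N q_h/(N − q_h). -/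
noncomputable section
open Real

theorem stmt11 (N : ℕ) (hN : 2 ≤ N) (hne : (Finset.univ : Finset (Fin N)).Nonempty)
    (p : Fin N → ℝ) (hp : ∀ i, 2 * N / (N + 2) < p i)
    (r : ℝ) (hr : 0 < r)
    (q : Fin N → ℝ) (hq : ∀ i, q i = p i + r)
    (hcase :
      (Finset.univ.sup' hne p / Finset.univ.inf' hne p < 1 + 2 / N ∧
        2 < Finset.univ.sup' hne p + r) ∨
      Finset.univ.sup' hne p / Finset.univ.inf' hne p < 1 + 1 / N) :
    ∀ i, q i * ((∑ j, (q j)⁻¹) - 1) < N := by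
  intro i
  set M := Finset.univ.sup' hne p with hMdef
  set m := Finset.univ.inf' hne p with hmdef
  have hN2 : (2:ℝ) ≤ (N:ℝ) := by exact_mod_cast hN
  have hNpos : (0:ℝ) < N := by linarith
  have hp1 : ∀ j, 1 < p j := by
    intro j
    have h := hp j
    have h2 : (1:ℝ) ≤ 2 * N / (N + 2) := by
      rw [le_div_iff₀ (by linarith)]
      linarith
    linarith
  have hmle : ∀ j, m ≤ p j := fun j => Finset.inf'_le p (Finset.mem_univ j)
  have hMge : ∀ j, p j ≤ M := fun j => Finset.le_sup' p (Finset.mem_univ j)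
  have hm1 : 1 < m := by
    rw [hmdef, Finset.lt_inf'_iff]
    exact fun j _ => hp1 j
  have hm0 : 0 < m := by linarith
  have hM1 : 1 < M := lt_of_lt_of_le hm1 ((hmle i).trans (hMge i))
  have hmM : m ≤ M := (hmle i).trans (hMge i)
  have hmr : 0 < m + r := by linarith
  have hMr : 1 < M + r := by linarith
  -- key inequality
  have key : (N:ℝ) * (M - m) < (M + r) * (m + r) := by
    rcases hcase with ⟨h1, h2⟩ | h1
    · have hM' : M < (1 + 2 / (N:ℝ)) * m := (div_lt_iff₀ hm0).mp h1
      have hdiv : (N:ℝ) * (2 / (N:ℝ)) = 2 := by field_simp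
      nlinarith [mul_lt_mul_of_pos_left hM' hNpos]
    · have hM' : M < (1 + 1 / (N:ℝ)) * m := (div_lt_iff₀ hm0).mp h1
      have hdiv : (N:ℝ) * (1 / (N:ℝ)) = 1 := by field_simp
      nlinarith [mul_lt_mul_of_pos_left hM' hNpos]
  have hqpos : ∀ j, 0 < q j := by
    intro j; rw [hq j]; have := hp1 j; linarith
  have hqle : ∀ j, q j ≤ M + r := by
    intro j; rw [hq j]; have := hMge j; linarith
  have hqge : ∀ j, m + r ≤ q j := by
    intro j; rw [hq j]; have := hmle j; linarith
  have hsum : (∑ j, (q j)⁻¹) ≤ (N:ℝ) * (m + r)⁻¹ := by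
    calc (∑ j, (q j)⁻¹) ≤ ∑ _j : Fin N, (m + r)⁻¹ := by
          apply Finset.sum_le_sum
          intro j _
          exact inv_anti₀ hmr (hqge j)
      _ = (N:ℝ) * (m + r)⁻¹ := by
          simp [Finset.sum_const, Finset.card_univ]
  set S : ℝ := (∑ j, (q j)⁻¹) - 1 with hSdef
  rcases le_or_gt S 0 with hS | hS
  · have : q i * S ≤ 0 := mul_nonpos_of_nonneg_of_nonpos (hqpos i).le hS
    linarith
  · have h1 : q i * S ≤ (M + r) * S := by
      apply mul_le_mul_of_nonneg_right (hqle i) hS.le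
    have hSle : S ≤ (N:ℝ) * (m + r)⁻¹ - 1 := by
      rw [hSdef]; linarith
    have h2 : (M + r) * S ≤ (M + r) * ((N:ℝ) * (m + r)⁻¹ - 1) :=
      mul_le_mul_of_nonneg_left hSle (by linarith)
    have hinv : (m + r)⁻¹ * (m + r) = 1 := inv_mul_cancel₀ (ne_of_gt hmr)
    have h3 : (M + r) * ((N:ℝ) * (m + r)⁻¹ - 1) < N := by
      rw [← sub_neg]
      have hexp : ((M + r) * ((N:ℝ) * (m + r)⁻¹ - 1) - N) * (m + r)
          = (N:ℝ) * (M - m) - (M + r) * (m + r) := by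
        field_simp
        ring
      nlinarith [mul_pos (sub_pos.mpr key) hmr]
    calc q i * S ≤ (M + r) * S := h1
      _ ≤ (M + r) * ((N:ℝ) * (m + r)⁻¹ - 1) := h2
      _ < N := h3
end
end
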